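/- arXiv:1512.00323 — 2 statements merged into one kernel-verified Lean document; each statement's English description precedes it below -/
import Mathlib

section
/- A phylogenetic tree on n taxa is determined up to label-preserving isomorphism by its set of induced splits: if two phylogenetic trees on {1,…,n} have the same split sets, they are isomorphic via an isomorphism fixing the leaf labels. -/
/-- A phylogenetic tree on `n` taxa: a finite tree whose degree-1 vertices (leaves)
are bijectively labelled by `Fin n`, and which has no vertices of degree 2. -/
structure PhyloTree (n : ℕ) where
  V : Type
  [fintypeV : Fintype V]
  [decEqV : DecidableEq V]
  G : SimpleGraph V
  [decAdj : DecidableRel G.Adj]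
  isTree : G.IsTree
  leaf : Fin n → V
  leaf_inj : Function.Injective leaf
  leaf_deg : ∀ i, G.degree (leaf i) = 1
  leaf_surj : ∀ v, G.degree v = 1 → ∃ i, leaf i = v
  no_deg2 : ∀ v, G.degree v ≠ 2

attribute [instance] PhyloTree.fintypeV PhyloTree.decEqV PhyloTree.decAdj

/-- The set of taxon labels lying on the `u`-side of the edge `{u, v}` after deleting it. -/
def PhyloTree.sideSet {n : ℕ} (T : PhyloTree n) (u v : T.V) : Set (Fin n) :=
  {i | (T.G.deleteEdges {s(u, v)}).Reachable u (T.leaf i)}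

/-- An internal edge: an edge both of whose endpoints have degree at least 2. -/
def PhyloTree.IsInternalEdge {n : ℕ} (T : PhyloTree n) (u v : T.V) : Prop :=
  T.G.Adj u v ∧ 2 ≤ T.G.degree u ∧ 2 ≤ T.G.degree v

/-- The set of splits induced by the internal edges of `T`. -/
def PhyloTree.splitSet {n : ℕ} (T : PhyloTree n) : Set (Set (Set (Fin n))) :=
  {P | ∃ u v, T.IsInternalEdge u v ∧ P = {T.sideSet u v, T.sideSet v u}}

/-- The set of internal edges of `T`. -/
def PhyloTree.internalEdgeSet {n : ℕ} (T : PhyloTree n) : Set (Sym2 T.V) :=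
  {e | e ∈ T.G.edgeSet ∧ ∀ v ∈ e, 2 ≤ T.G.degree v}

/-!
Record a vertex `v` by `sidesAt v`, the leaf sets of all sides (pendant edges included) that
contain `v`. The leaf sets of sides are read off from the splits; distinct directed edges have
distinct leaf sets, so `sidesAt` is injective, and two vertices are adjacent exactly when their
records differ by a single side. Conversely, a family that picks one side of every edge and is
pairwise intersecting is the record of a vertex: orient each edge towards its chosen side; a finite
tree has a sink, and the sink lies in every chosen side. The record of a vertex of one tree is
such a family for the other tree, which yields the isomorphism. The absence of degree-2 vertices
enters only through the fact that two sides with a common vertex have a common leaf: at a vertex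
of degree at least 3 some branch avoids both edges.
-/

namespace SimpleGraph

variable {V : Type*}

def side (G : SimpleGraph V) (u w : V) : Set V :=
  {x | (G.deleteEdges {s(u, w)}).Reachable u x}

variable {G : SimpleGraph V} {u w x y c c' u' w' : V}

lemma mem_side_self : u ∈ G.side u w := Reachable.refl u

lemma mem_side_iff_exists_walk : x ∈ G.side u w ↔ ∃ p : G.Walk u x, s(u, w) ∉ p.edges :=
  reachable_deleteEdges_iff_exists_walk

lemma mem_side_of_adj (hx : x ∈ G.side u w) (h : G.Adj x y) (hne : s(x, y) ≠ s(u, w)) :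
    y ∈ G.side u w :=
  hx.trans (deleteEdges_adj.mpr ⟨h, hne⟩).reachable

lemma eq_of_mem_side_of_notMem_side (h : G.Adj x y) (hx : x ∈ G.side u w)
    (hy : y ∉ G.side u w) : s(x, y) = s(u, w) :=
  by_contra fun hne => hy (mem_side_of_adj hx h hne)

lemma disjoint_side (hG : G.IsAcyclic) (h : G.Adj u w) : Disjoint (G.side u w) (G.side w u) := by
  refine Set.disjoint_left.mpr fun x hu (hw : (G.deleteEdges {s(w, u)}).Reachable w x) => ?_
  rw [Sym2.eq_swap] at hw
  exact isBridge_iff.mp (isAcyclic_iff_forall_adj_isBridge.mp hG h) (hu.trans hw.symm)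

lemma notMem_side (hG : G.IsAcyclic) (h : G.Adj u w) : w ∉ G.side u w :=
  fun hw => Set.disjoint_left.mp (disjoint_side hG h) hw mem_side_self

lemma mem_side_of_isPath_cons {h : G.Adj x c} {q : G.Walk c u} (hp : (Walk.cons h q).IsPath) :
    u ∈ G.side c x := by
  have hx : x ∉ q.support := (Walk.cons_isPath_iff h q).mp hp |>.2
  exact mem_side_iff_exists_walk.mpr ⟨q, fun he => hx (q.snd_mem_support_of_mem_edges he)⟩

lemma exists_adj_mem_side (hG : G.Preconnected) (hne : x ≠ u) :
    ∃ c, G.Adj x c ∧ u ∈ G.side c x := by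
  obtain ⟨p, hp⟩ := hG.exists_isPath x u
  cases p with
  | nil => exact absurd rfl hne
  | cons h q => exact ⟨_, h, mem_side_of_isPath_cons hp⟩

lemma mem_side_or_mem_side (hG : G.Preconnected) (u w x : V) :
    x ∈ G.side u w ∨ x ∈ G.side w u := by
  obtain ⟨p, hp⟩ := hG.exists_isPath u x
  by_cases he : s(u, w) ∈ p.edges
  · cases p with
    | nil => simp at he
    | cons h q =>
      have hu : u ∉ q.support := (Walk.cons_isPath_iff h q).mp hp |>.2
      rw [Walk.edges_cons, List.mem_cons] at he
      rcases he with he | he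
      · obtain rfl := Sym2.congr_right.mp he
        exact Or.inr (mem_side_of_isPath_cons hp)
      · exact absurd (q.fst_mem_support_of_mem_edges he) hu
  · exact Or.inl (mem_side_iff_exists_walk.mpr ⟨p, he⟩)

lemma compl_side (hG : G.IsTree) (h : G.Adj u w) : (G.side u w)ᶜ = G.side w u :=
  Set.ext fun x => ⟨(mem_side_or_mem_side hG.connected.preconnected u w x).resolve_left,
    fun hx hx' => Set.disjoint_left.mp (disjoint_side hG.isAcyclic h) hx' hx⟩

lemma side_subset_side (hx : x ∉ G.side u w) (hu : u ∈ G.side c x) :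
    G.side u w ⊆ G.side c x := by
  classical
  rintro y ⟨p⟩
  set q := p.mapLe (deleteEdges_le _)
  have hxq : x ∉ q.support := by
    rw [Walk.support_mapLe_eq_support]
    exact fun hxp => hx ⟨p.takeUntil x hxp⟩
  exact hu.trans (reachable_deleteEdges_iff_exists_walk.mpr
    ⟨q, fun he => hxq (q.snd_mem_support_of_mem_edges he)⟩)

lemma side_ssubset_side (hG : G.IsAcyclic) (hwu : G.Adj w u) (huc : G.Adj u c) (hcw : c ≠ w) :
    G.side c u ⊂ G.side u w := by
  have hc : c ∈ G.side u w := mem_side_of_adj mem_side_self huc (hcw ∘ Sym2.congr_right.mp)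
  have hw : w ∉ G.side c u := fun hw =>
    notMem_side hG huc.symm (mem_side_of_adj hw hwu fun he => hcw (Sym2.congr_left.mp he).symm)
  exact (Set.ssubset_iff_of_subset (side_subset_side hw hc)).mpr
    ⟨u, mem_side_self, notMem_side hG huc.symm⟩

lemma side_subset_side_of_adj (hG : G.IsAcyclic) (hxc : G.Adj x c) (hx : x ∈ G.side u w)
    (hw : w ∉ G.side c x) : G.side c x ⊆ G.side u w := by
  refine side_subset_side hw (mem_side_of_adj hx hxc fun he => ?_)
  rcases Sym2.eq_iff.mp he with ⟨rfl, rfl⟩ | ⟨rfl, rfl⟩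
  · exact hw mem_side_self
  · exact notMem_side hG hxc.symm hx

lemma eq_of_mem_side_of_mem_side (hG : G.IsAcyclic) (hc : G.Adj x c) (hc' : G.Adj x c')
    (hy : y ∈ G.side c x) (hy' : y ∈ G.side c' x) : c = c' := by
  by_contra hne
  have hc'c : c' ∉ G.side c x := fun h =>
    notMem_side hG hc.symm (mem_side_of_adj h hc'.symm fun he => hne (Sym2.congr_left.mp he).symm)
  have hsub := side_subset_side_of_adj hG hc mem_side_self hc'c
  exact Set.disjoint_left.mp (disjoint_side hG hc') (hsub hy) hy'

lemma exists_adj_side_subset_inter (hG : G.IsAcyclic) [Fintype (G.neighborSet x)]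
    (hx3 : 3 ≤ G.degree x) (hx : x ∈ G.side u w) (hx' : x ∈ G.side u' w') :
    ∃ c, G.Adj x c ∧ G.side c x ⊆ G.side u w ∩ G.side u' w' := by
  classical
  by_contra! hbad
  -- The two sides through `x` each exclude at most one branch at `x`.
  have hbranch : ∀ y, ((G.neighborFinset x).filter (y ∈ G.side · x)).card ≤ 1 := fun y =>
    Finset.card_le_one.mpr fun c hc c' hc' => by
      simp only [Finset.mem_filter, mem_neighborFinset] at hc hc'
      exact eq_of_mem_side_of_mem_side hG hc.1 hc'.1 hc.2 hc'.2
  have hcover : G.neighborFinset x ⊆ (G.neighborFinset x).filter (w ∈ G.side · x) ∪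
      (G.neighborFinset x).filter (w' ∈ G.side · x) := by
    intro c hc
    have hxc := (G.mem_neighborFinset x c).mp hc
    simp only [Finset.mem_union, Finset.mem_filter, hc, true_and]
    by_contra! h
    exact hbad c hxc (Set.subset_inter (side_subset_side_of_adj hG hxc hx h.1)
      (side_subset_side_of_adj hG hxc hx' h.2))
  have : G.degree x ≤ 2 := calc
    G.degree x = (G.neighborFinset x).card := (card_neighborFinset_eq_degree G x).symm
    _ ≤ _ := (Finset.card_le_card hcover).trans (Finset.card_union_le _ _)
    _ ≤ 1 + 1 := add_le_add (hbranch w) (hbranch w')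
  omega

lemma side_eq_singleton [Fintype (G.neighborSet y)] (hy : G.degree y = 1) (h : G.Adj y w) :
    G.side y w = {y} := by
  refine Set.eq_singleton_iff_unique_mem.mpr ⟨mem_side_self, fun z ⟨p⟩ => ?_⟩
  cases p with
  | nil => rfl
  | cons h' _ =>
    obtain ⟨hadj, hne⟩ := deleteEdges_adj.mp h'
    obtain rfl := (degree_eq_one_iff_existsUnique_adj.mp hy).unique hadj h
    exact absurd (Set.mem_singleton _) hne

lemma IsAcyclic.exists_sink_of_adj [Finite V] {O : V → V → Prop} (hG : G.IsAcyclic)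
    (hO : ∀ u w, G.Adj u w → O u w ∨ O w u) {x c : V} (hxc : G.Adj x c) (hcx : O c x) :
    ∃ y, ∀ z, G.Adj y z → O y z := by
  by_cases hc : ∀ z, G.Adj c z → O c z
  · exact ⟨c, hc⟩
  push Not at hc
  obtain ⟨d, hcd, hd⟩ := hc
  have hdx : d ≠ x := by rintro rfl; exact hd hcx
  have hss := side_ssubset_side hG hxc hcd hdx
  exact hG.exists_sink_of_adj hO hcd ((hO c d hcd).resolve_left hd)
termination_by (G.side c x).ncard
decreasing_by exact Set.ncard_lt_ncard hss

lemma IsAcyclic.exists_sink [Finite V] [Nonempty V] {O : V → V → Prop} (hG : G.IsAcyclic)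
    (hO : ∀ u w, G.Adj u w → O u w ∨ O w u) : ∃ y, ∀ z, G.Adj y z → O y z := by
  obtain ⟨x⟩ := ‹Nonempty V›
  by_cases hx : ∀ z, G.Adj x z → O x z
  · exact ⟨x, hx⟩
  push Not at hx
  obtain ⟨c, hxc, hc⟩ := hx
  exact hG.exists_sink_of_adj hO hxc ((hO x c hxc).resolve_left hc)

variable [Fintype V] [DecidableRel G.Adj]

lemma exists_degree_eq_one_mem_side (hG : G.IsAcyclic) {u w : V} (h : G.Adj u w) :
    ∃ y ∈ G.side u w, G.degree y = 1 := by
  by_cases hu : G.degree u = 1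
  · exact ⟨u, mem_side_self, hu⟩
  have hu2 : 1 < G.degree u := by
    have := (G.degree_pos_iff_exists_adj u).mpr ⟨w, h⟩
    omega
  obtain ⟨c, hc, hcw⟩ := Finset.exists_mem_ne hu2 w
  have huc : G.Adj u c := (G.mem_neighborFinset u c).mp hc
  have hss := side_ssubset_side hG h.symm huc hcw
  obtain ⟨y, hy, hdeg⟩ := exists_degree_eq_one_mem_side hG huc.symm
  exact ⟨y, hss.subset hy, hdeg⟩
termination_by (G.side u w).ncard
decreasing_by exact Set.ncard_lt_ncard hss

lemma exists_degree_eq_one_mem_side_inter (hG : G.IsTree) (h2 : ∀ v, G.degree v ≠ 2)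
    (huw : G.Adj u w) (hx : x ∈ G.side u w) (hx' : x ∈ G.side u' w') :
    ∃ y ∈ G.side u w ∩ G.side u' w', G.degree y = 1 := by
  by_cases hx1 : G.degree x = 1
  · exact ⟨x, ⟨hx, hx'⟩, hx1⟩
  have : Nontrivial V := nontrivial_of_ne u w huw.ne
  have hpos := hG.connected.preconnected.degree_pos_of_nontrivial x
  obtain ⟨c, hxc, hsub⟩ :=
    exists_adj_side_subset_inter hG.isAcyclic (by have := h2 x; omega) hx hx'
  obtain ⟨y, hy, hdeg⟩ := exists_degree_eq_one_mem_side hG.isAcyclic hxc.symm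
  exact ⟨y, hsub hy, hdeg⟩

end SimpleGraph

namespace PhyloTree

open SimpleGraph

variable {n : ℕ} (T : PhyloTree n)

def sides : Set (Set (Fin n)) :=
  {A | ∃ u w, T.G.Adj u w ∧ A = T.sideSet u w}

def sidesAt (v : T.V) : Set (Set (Fin n)) :=
  {A | ∃ u w, T.G.Adj u w ∧ v ∈ T.G.side u w ∧ A = T.sideSet u w}

variable {T} {u w u' w' v x : T.V}

lemma sideSet_eq_preimage (u w : T.V) : T.sideSet u w = T.leaf ⁻¹' T.G.side u w := rfl

lemma sideSet_swap (h : T.G.Adj u w) : T.sideSet w u = (T.sideSet u w)ᶜ := by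
  rw [sideSet_eq_preimage, sideSet_eq_preimage, ← compl_side T.isTree h, Set.preimage_compl]

lemma sideSet_leaf {i : Fin n} (h : T.G.Adj (T.leaf i) w) : T.sideSet (T.leaf i) w = {i} := by
  rw [sideSet_eq_preimage, side_eq_singleton (T.leaf_deg i) h]
  exact Set.ext fun j => T.leaf_inj.eq_iff

lemma exists_adj_leaf (i : Fin n) : ∃ w, T.G.Adj (T.leaf i) w :=
  (T.G.degree_pos_iff_exists_adj _).mp (by rw [T.leaf_deg]; exact one_pos)

lemma mem_sides_iff {A : Set (Fin n)} :
    A ∈ T.sides ↔ (∃ P ∈ T.splitSet, A ∈ P) ∨ ∃ i, A = {i} ∨ A = {i}ᶜ := by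
  constructor
  · rintro ⟨u, w, huw, rfl⟩
    have hdeg {a b} (hab : T.G.Adj a b) (h : ¬ 2 ≤ T.G.degree a) : T.G.degree a = 1 := by
      have := (T.G.degree_pos_iff_exists_adj a).mpr ⟨b, hab⟩
      omega
    by_cases hu : 2 ≤ T.G.degree u
    · by_cases hw : 2 ≤ T.G.degree w
      · exact Or.inl ⟨_, ⟨u, w, ⟨huw, hu, hw⟩, rfl⟩, Or.inl rfl⟩
      · obtain ⟨i, rfl⟩ := T.leaf_surj w (hdeg huw.symm hw)
        exact Or.inr ⟨i, Or.inr (by rw [sideSet_swap huw.symm, sideSet_leaf huw.symm])⟩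
    · obtain ⟨i, rfl⟩ := T.leaf_surj u (hdeg huw hu)
      exact Or.inr ⟨i, Or.inl (sideSet_leaf huw)⟩
  · rintro (⟨P, ⟨u, w, ⟨huw, -⟩, rfl⟩, hA⟩ | ⟨i, rfl | rfl⟩)
    · rcases hA with rfl | rfl
      exacts [⟨u, w, huw, rfl⟩, ⟨w, u, huw.symm, rfl⟩]
    · obtain ⟨w, hw⟩ := T.exists_adj_leaf i
      exact ⟨_, _, hw, (sideSet_leaf hw).symm⟩
    · obtain ⟨w, hw⟩ := T.exists_adj_leaf i
      exact ⟨_, _, hw.symm, by rw [sideSet_swap hw, sideSet_leaf hw]⟩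

lemma sides_eq_of_splitSet_eq {T₁ T₂ : PhyloTree n} (h : T₁.splitSet = T₂.splitSet) :
    T₁.sides = T₂.sides :=
  Set.ext fun _ => by rw [mem_sides_iff, mem_sides_iff, h]

lemma sideSet_inter_nonempty (huw : T.G.Adj u w) (hx : x ∈ T.G.side u w)
    (hx' : x ∈ T.G.side u' w') : (T.sideSet u w ∩ T.sideSet u' w').Nonempty := by
  obtain ⟨y, hy, hdeg⟩ := exists_degree_eq_one_mem_side_inter T.isTree T.no_deg2 huw hx hx'
  obtain ⟨i, rfl⟩ := T.leaf_surj y hdeg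
  exact ⟨i, hy⟩

lemma side_subset_side_of_sideSet_subset (huw : T.G.Adj u w) (hu'w' : T.G.Adj u' w')
    (h : T.sideSet u w ⊆ T.sideSet u' w') : T.G.side u w ⊆ T.G.side u' w' := by
  intro x hx
  by_contra hx'
  rw [← Set.mem_compl_iff, compl_side T.isTree hu'w'] at hx'
  obtain ⟨i, hi, hi'⟩ := sideSet_inter_nonempty huw hx hx'
  rw [sideSet_swap hu'w'] at hi'
  exact hi' (h hi)

lemma eq_of_sideSet_eq (huw : T.G.Adj u w) (hu'w' : T.G.Adj u' w')
    (h : T.sideSet u w = T.sideSet u' w') : u = u' ∧ w = w' := by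
  have hside : T.G.side u w = T.G.side u' w' :=
    (side_subset_side_of_sideSet_subset huw hu'w' h.subset).antisymm
      (side_subset_side_of_sideSet_subset hu'w' huw h.symm.subset)
  have hu : u ∈ T.G.side u' w' := hside ▸ mem_side_self
  have hw : w ∉ T.G.side u' w' := hside ▸ notMem_side T.isTree.isAcyclic huw
  rcases Sym2.eq_iff.mp (eq_of_mem_side_of_notMem_side huw hu hw) with h' | ⟨rfl, -⟩
  · exact h'
  · exact absurd hu (notMem_side T.isTree.isAcyclic hu'w')

lemma sideSet_mem_sidesAt (huw : T.G.Adj u w) :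
    T.sideSet u w ∈ T.sidesAt v ↔ v ∈ T.G.side u w := by
  refine ⟨fun ⟨u', w', hu'w', hv, h⟩ => ?_, fun hv => ⟨u, w, huw, hv, rfl⟩⟩
  obtain ⟨rfl, rfl⟩ := eq_of_sideSet_eq huw hu'w' h
  exact hv

lemma sidesAt_subset_sides (v : T.V) : T.sidesAt v ⊆ T.sides :=
  fun _ ⟨u, w, huw, _, hA⟩ => ⟨u, w, huw, hA⟩

lemma sidesAt_leaf (i : Fin n) : T.sidesAt (T.leaf i) = {A ∈ T.sides | i ∈ A} := by
  ext A
  constructor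
  · rintro ⟨u, w, huw, hi, rfl⟩
    exact ⟨⟨u, w, huw, rfl⟩, hi⟩
  · rintro ⟨⟨u, w, huw, rfl⟩, hi⟩
    exact ⟨u, w, huw, hi, rfl⟩

lemma sidesAt_inter_nonempty {A B : Set (Fin n)} (hA : A ∈ T.sidesAt v) (hB : B ∈ T.sidesAt v) :
    (A ∩ B).Nonempty := by
  obtain ⟨u, w, huw, hvA, rfl⟩ := hA
  obtain ⟨u', w', -, hvB, rfl⟩ := hB
  exact sideSet_inter_nonempty huw hvA hvB

lemma mem_sidesAt_or_compl_mem {A : Set (Fin n)} (hA : A ∈ T.sides) (v : T.V) :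
    A ∈ T.sidesAt v ∨ Aᶜ ∈ T.sidesAt v := by
  obtain ⟨u, w, huw, rfl⟩ := hA
  rw [← sideSet_swap huw, sideSet_mem_sidesAt huw, sideSet_mem_sidesAt huw.symm]
  exact mem_side_or_mem_side T.isTree.connected.preconnected u w v

lemma sideSet_mem_sidesAt_diff (huw : T.G.Adj u w) (hx : x ∈ T.G.side u w)
    (hv : v ∉ T.G.side u w) : T.sideSet u w ∈ T.sidesAt x \ T.sidesAt v := by
  rw [Set.mem_sdiff, sideSet_mem_sidesAt huw, sideSet_mem_sidesAt huw]
  exact ⟨hx, hv⟩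

lemma sidesAt_injective : Function.Injective T.sidesAt := by
  intro x v h
  by_contra hne
  obtain ⟨c, hxc, hv⟩ := exists_adj_mem_side T.isTree.connected.preconnected hne
  have hv' : v ∉ T.G.side x c := Set.disjoint_right.mp (disjoint_side T.isTree.isAcyclic hxc) hv
  have := sideSet_mem_sidesAt_diff hxc mem_side_self hv'
  rw [h, Set.sdiff_self] at this
  exact this

lemma adj_iff_sidesAt : T.G.Adj x v ↔ ∃ A, T.sidesAt x \ T.sidesAt v = {A} := by
  have hG := T.isTree.isAcyclic
  constructor
  · intro h
    refine ⟨T.sideSet x v, Set.eq_singleton_iff_unique_mem.mpr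
      ⟨sideSet_mem_sidesAt_diff h mem_side_self (notMem_side hG h), ?_⟩⟩
    rintro _ ⟨⟨u, w, huw, hx, rfl⟩, hv⟩
    rw [sideSet_mem_sidesAt huw] at hv
    rcases Sym2.eq_iff.mp (eq_of_mem_side_of_notMem_side h hx hv) with ⟨rfl, rfl⟩ | ⟨-, rfl⟩
    · rfl
    · exact absurd mem_side_self hv
  · rintro ⟨A, hA⟩
    have hne : x ≠ v := by
      rintro rfl
      simp at hA
    have hT := T.isTree.connected.preconnected
    obtain ⟨c, hxc, hvc⟩ := exists_adj_mem_side hT hne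
    obtain ⟨c', hvc', hxc'⟩ := exists_adj_mem_side hT hne.symm
    have h₁ := sideSet_mem_sidesAt_diff hxc mem_side_self
      (Set.disjoint_right.mp (disjoint_side hG hxc) hvc)
    have h₂ := sideSet_mem_sidesAt_diff hvc'.symm hxc' (notMem_side hG hvc'.symm)
    rw [hA, Set.mem_singleton_iff] at h₁ h₂
    obtain ⟨rfl, rfl⟩ := eq_of_sideSet_eq hxc hvc'.symm (h₁.trans h₂.symm)
    exact hxc

lemma mem_side_of_sink {K : Set (Set (Fin n))} (hK : ∀ A ∈ K, ∀ B ∈ K, (A ∩ B).Nonempty)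
    (hx : ∀ c, T.G.Adj x c → T.sideSet x c ∈ K) (huwK : T.sideSet u w ∈ K) :
    x ∈ T.G.side u w := by
  by_contra hxu
  have hne : x ≠ u := fun h => hxu (h ▸ mem_side_self)
  obtain ⟨c, hxc, hu⟩ := exists_adj_mem_side T.isTree.connected.preconnected hne
  have hsub := side_subset_side hxu hu
  obtain ⟨i, hi, hi'⟩ := hK _ (hx c hxc) _ huwK
  exact Set.disjoint_left.mp (disjoint_side T.isTree.isAcyclic hxc) hi (hsub hi')

lemma exists_sidesAt_eq {K : Set (Set (Fin n))} (hKs : K ⊆ T.sides)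
    (hcompl : ∀ A ∈ T.sides, A ∈ K ∨ Aᶜ ∈ K)
    (hK : ∀ A ∈ K, ∀ B ∈ K, (A ∩ B).Nonempty) :
    ∃ x, T.sidesAt x = K := by
  have : Nonempty T.V := T.isTree.connected.nonempty
  obtain ⟨x, hx⟩ := T.isTree.isAcyclic.exists_sink (O := fun u w => T.sideSet u w ∈ K)
    fun u w huw => by rw [sideSet_swap huw]; exact hcompl _ ⟨u, w, huw, rfl⟩
  have hmem {u w} : T.sideSet u w ∈ K → x ∈ T.G.side u w := mem_side_of_sink hK hx
  refine ⟨x, Set.ext fun A => ⟨?_, fun hA => ?_⟩⟩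
  · rintro ⟨u, w, huw, hxu, rfl⟩
    refine (hcompl _ ⟨u, w, huw, rfl⟩).resolve_right fun hc => ?_
    rw [← sideSet_swap huw] at hc
    exact Set.disjoint_left.mp (disjoint_side T.isTree.isAcyclic huw) hxu (hmem hc)
  · obtain ⟨u, w, huw, rfl⟩ := hKs hA
    exact ⟨u, w, huw, hmem hA, rfl⟩

lemma exists_sidesAt_eq_sidesAt {T₁ T₂ : PhyloTree n} (hs : T₁.sides = T₂.sides)
    (v : T₁.V) :
    ∃ x, T₂.sidesAt x = T₁.sidesAt v :=
  T₂.exists_sidesAt_eq (hs ▸ T₁.sidesAt_subset_sides v)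
    (fun _ hA => T₁.mem_sidesAt_or_compl_mem (hs ▸ hA) v)
    (fun _ hA _ hB => T₁.sidesAt_inter_nonempty hA hB)

lemma exists_iso_sidesAt_eq {T₁ T₂ : PhyloTree n} (hs : T₁.sides = T₂.sides) :
    ∃ φ : T₁.G ≃g T₂.G, ∀ v, T₂.sidesAt (φ v) = T₁.sidesAt v := by
  choose f hf using exists_sidesAt_eq_sidesAt hs
  choose g hg using exists_sidesAt_eq_sidesAt hs.symm
  have hgf : Function.LeftInverse g f := fun v => T₁.sidesAt_injective (by rw [hg, hf])
  have hfg : Function.RightInverse g f := fun v => T₂.sidesAt_injective (by rw [hf, hg])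
  refine ⟨⟨⟨f, g, hgf, hfg⟩, fun {a b} => ?_⟩, hf⟩
  change T₂.G.Adj (f a) (f b) ↔ T₁.G.Adj a b
  rw [adj_iff_sidesAt, adj_iff_sidesAt, hf, hf]

end PhyloTree

/-- A phylogenetic tree on `n` taxa is determined up to label-preserving isomorphism by its
set of induced splits. -/
theorem phyloTree_determined_by_splits {n : ℕ} (T₁ T₂ : PhyloTree n)
    (h : T₁.splitSet = T₂.splitSet) :
    ∃ φ : T₁.G ≃g T₂.G, ∀ i, φ (T₁.leaf i) = T₂.leaf i := by
  have hs := PhyloTree.sides_eq_of_splitSet_eq h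
  obtain ⟨φ, hφ⟩ := PhyloTree.exists_iso_sidesAt_eq hs
  refine ⟨φ, fun i => T₂.sidesAt_injective ?_⟩
  rw [hφ, PhyloTree.sidesAt_leaf, PhyloTree.sidesAt_leaf, hs]
end

section
/- A maximal collection of pairwise compatible splits of {1,…,n} (with each part of each split of size ≥ 2) has exactly n − 3 elements, for n ≥ 3. -/
/-- `P` is a split: an unordered bipartition of the ambient set into two nonempty parts. -/
def IsSplit {α : Type*} (P : Set (Set α)) : Prop :=
  ∃ I J : Set α, P = {I, J} ∧ I.Nonempty ∧ J.Nonempty ∧ I ∪ J = Set.univ ∧ I ∩ J = ∅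

/-- Compatibility of the ordered splits `(I,J)` and `(K,L)`. -/
def CompatQuad {α : Type*} (I J K L : Set α) : Prop :=
  I ∩ K = ∅ ∨ I ∩ L = ∅ ∨ J ∩ K = ∅ ∨ J ∩ L = ∅

/-- Compatibility of unordered splits. -/
def PairCompatible {α : Type*} (P Q : Set (Set α)) : Prop :=
  ∃ I J K L, P = {I, J} ∧ Q = {K, L} ∧ CompatQuad I J K L

/-- `P` is a split with both parts of size at least 2. -/
def IsSplit2 {α : Type*} (P : Set (Set α)) : Prop :=
  ∃ I J : Set α, P = {I, J} ∧ 2 ≤ I.ncard ∧ 2 ≤ J.ncard ∧ I ∪ J = Set.univ ∧ I ∩ J = ∅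



def Lam {α : Type*} (A B : Set α) : Prop := A ∩ B = ∅ ∨ A ⊆ B ∨ B ⊆ A

lemma laminar_card {α : Type*} [Finite α] :
    ∀ m : ℕ, ∀ S : Set α, S.ncard = m → ∀ L : Set (Set α),
    (∀ A ∈ L, A ⊆ S ∧ 2 ≤ A.ncard ∧ A ≠ S) →
    (∀ A ∈ L, ∀ B ∈ L, Lam A B) →
    (∀ D : Set α, D ⊆ S → 2 ≤ D.ncard → D ≠ S → (∀ B ∈ L, Lam D B) → D ∈ L) →
    L.ncard = m - 2 := by
  classical
  intro m
  induction m using Nat.strong_induction_on with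
  | _ m IH =>
  intro S hS L hmem hlam hmax
  rcases le_or_gt m 2 with hm | hm
  · -- L must be empty
    have hLe : L = ∅ := by
      ext A
      simp only [Set.mem_empty_iff_false, iff_false]
      intro hA
      obtain ⟨hAS, hA2, hAne⟩ := hmem A hA
      have h1 : A.ncard ≤ S.ncard := Set.ncard_le_ncard hAS S.toFinite
      exact hAne (Set.eq_of_subset_of_ncard_le hAS (by omega) S.toFinite)
    rw [hLe, Set.ncard_empty]; omega
  · -- m ≥ 3
    have hLne : L.Nonempty := by
      by_contra hemp
      rw [Set.not_nonempty_iff_eq_empty] at hemp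
      obtain ⟨D, hDS, hD2⟩ := Set.exists_subset_card_eq (show 2 ≤ S.ncard by omega)
      have : D ∈ L := hmax D hDS (by omega) (by rintro rfl; omega) (by simp [hemp])
      simp [hemp] at this
    obtain ⟨A, hAL, hAmin⟩ := Set.exists_min_image L Set.ncard (Set.toFinite L) hLne
    obtain ⟨hAS, hA2, hAne⟩ := hmem A hAL
    -- minimality: subsets of A within L equal A
    have hminA : ∀ C ∈ L, C ⊆ A → C = A := fun C hCL hCA =>
      Set.eq_of_subset_of_ncard_le hCA (hAmin C hCL) A.toFinite
    have hA2' : A.ncard = 2 := by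
      obtain ⟨B, hBA, hB2⟩ := Set.exists_subset_card_eq hA2
      rcases eq_or_ne B A with rfl | hBne
      · exact hB2
      · have hBL : B ∈ L := by
          refine hmax B (hBA.trans hAS) (by omega) (by rintro rfl; omega) ?_
          intro C hCL
          rcases hlam A hAL C hCL with h | h | h
          · exact Or.inl (Set.eq_empty_of_subset_empty
              (by rw [← h]; exact Set.inter_subset_inter_left _ hBA))
          · exact Or.inr (Or.inl (hBA.trans h))
          · exact Or.inr (Or.inl (by rw [hminA C hCL h]; exact hBA))
        have := hAmin B hBL
        omega
    obtain ⟨a, b, hab, hAab⟩ := Set.ncard_eq_two.mp hA2'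
    have haA : a ∈ A := by rw [hAab]; exact Set.mem_insert _ _
    have hbA : b ∈ A := by rw [hAab]; exact Set.mem_insert_iff.mpr (Or.inr rfl)
    have hbS : b ∈ S := hAS hbA
    have haS : a ∈ S := hAS haA
    -- dichotomy for other members
    have hdich : ∀ B ∈ L, B ≠ A → A ⊆ B ∨ A ∩ B = ∅ := by
      intro B hBL hBne
      rcases hlam A hAL B hBL with h | h | h
      · exact Or.inr h
      · exact Or.inl h
      · exact absurd (hminA B hBL h) hBne
    set S' : Set α := S \ {b} with hS'def
    set L' : Set (Set α) := (fun B => B \ {b}) '' (L \ {A}) with hL'def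
    have hS' : S'.ncard = m - 1 := by
      rw [hS'def, Set.ncard_diff_singleton_of_mem hbS, hS]
    -- basic facts about members of L \ {A}
    have hBfacts : ∀ B ∈ L, B ≠ A →
        (B \ {b}) ⊆ S' ∧ 2 ≤ (B \ {b}).ncard ∧ (B \ {b}) ≠ S' := by
      intro B hBL hBne
      obtain ⟨hBS, hB2, hBneS⟩ := hmem B hBL
      refine ⟨fun x hx => ⟨hBS hx.1, hx.2⟩, ?_, ?_⟩
      · rcases hdich B hBL hBne with h | h
        · have hbB : b ∈ B := h hbA
          have hAB : A ⊂ B := ssubset_of_subset_of_ne h (fun e => hBne e.symm)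
          have : A.ncard < B.ncard := Set.ncard_lt_ncard hAB B.toFinite
          rw [Set.ncard_diff_singleton_of_mem hbB]
          omega
        · have hbB : b ∉ B := fun hb => by
            have : b ∈ A ∩ B := ⟨hbA, hb⟩
            rw [h] at this; exact this
          rw [Set.diff_singleton_eq_self hbB]
          exact hB2
      · rcases hdich B hBL hBne with h | h
        · intro heq
          apply hBneS
          apply Set.Subset.antisymm hBS
          intro x hxS
          rcases eq_or_ne x b with rfl | hxb
          · exact h hbA
          · have : x ∈ B \ {b} := heq ▸ ⟨hxS, hxb⟩
            exact this.1
        · have haB : a ∉ B := fun ha => by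
            have : a ∈ A ∩ B := ⟨haA, ha⟩
            rw [h] at this; exact this
          intro heq
          have : a ∈ B \ {b} := heq ▸ ⟨haS, hab⟩
          exact haB this.1
    -- injectivity
    have hinj : Set.InjOn (fun B => B \ {b}) (L \ {A}) := by
      rintro B₁ ⟨hB₁, hB₁ne⟩ B₂ ⟨hB₂, hB₂ne⟩ heq
      simp only at heq
      have hb₁ : b ∈ B₁ ↔ A ⊆ B₁ := by
        constructor
        · intro hb
          rcases hdich B₁ hB₁ hB₁ne with h | h
          · exact h
          · exact absurd (show b ∈ A ∩ B₁ from ⟨hbA, hb⟩) (h ▸ fun h => h)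
        · exact fun h => h hbA
      have hb₂ : b ∈ B₂ ↔ A ⊆ B₂ := by
        constructor
        · intro hb
          rcases hdich B₂ hB₂ hB₂ne with h | h
          · exact h
          · exact absurd (show b ∈ A ∩ B₂ from ⟨hbA, hb⟩) (h ▸ fun h => h)
        · exact fun h => h hbA
      by_cases h1 : b ∈ B₁ <;> by_cases h2 : b ∈ B₂
      · ext x
        rcases eq_or_ne x b with rfl | hxb
        · simp [h1, h2]
        · constructor
          · intro hx; have : x ∈ B₁ \ {b} := ⟨hx, hxb⟩
            exact (heq ▸ this).1
          · intro hx; have : x ∈ B₂ \ {b} := ⟨hx, hxb⟩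
            exact (heq.symm ▸ this).1
      · -- b ∈ B₁, b ∉ B₂ : contradiction
        exfalso
        rcases hdich B₂ hB₂ hB₂ne with h | h
        · exact h2 (h hbA)
        · have haB₂ : a ∉ B₂ := fun ha =>
            absurd (show a ∈ A ∩ B₂ from ⟨haA, ha⟩) (h ▸ fun h => h)
          have haB₁ : a ∈ B₁ := (hb₁.mp h1) haA
          have : a ∈ B₁ \ {b} := ⟨haB₁, hab⟩
          rw [heq] at this
          exact haB₂ this.1
      · exfalso
        rcases hdich B₁ hB₁ hB₁ne with h | h
        · exact h1 (h hbA)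
        · have haB₁ : a ∉ B₁ := fun ha =>
            absurd (show a ∈ A ∩ B₁ from ⟨haA, ha⟩) (h ▸ fun h => h)
          have haB₂ : a ∈ B₂ := (hb₂.mp h2) haA
          have : a ∈ B₂ \ {b} := ⟨haB₂, hab⟩
          rw [← heq] at this
          exact haB₁ this.1
      · rw [Set.diff_singleton_eq_self h1, Set.diff_singleton_eq_self h2] at heq
        exact heq
    -- laminarity of L'
    have hlam' : ∀ A' ∈ L', ∀ B' ∈ L', Lam A' B' := by
      rintro _ ⟨B₁, ⟨hB₁, _⟩, rfl⟩ _ ⟨B₂, ⟨hB₂, _⟩, rfl⟩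
      rcases hlam B₁ hB₁ B₂ hB₂ with h | h | h
      · exact Or.inl (Set.eq_empty_of_subset_empty (fun x hx => h ▸ ⟨hx.1.1, hx.2.1⟩))
      · exact Or.inr (Or.inl (fun x hx => ⟨h hx.1, hx.2⟩))
      · exact Or.inr (Or.inr (fun x hx => ⟨h hx.1, hx.2⟩))
    -- maximality of L'
    have hmax' : ∀ D : Set α, D ⊆ S' → 2 ≤ D.ncard → D ≠ S' →
        (∀ B' ∈ L', Lam D B') → D ∈ L' := by
      intro D hDS' hD2 hDne hDlam
      have hbD : b ∉ D := fun hb => (hDS' hb).2 rfl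
      set E : Set α := if a ∈ D then D ∪ {b} else D with hEdef
      have hDE : D ⊆ E := by
        rw [hEdef]; split <;> [exact Set.subset_union_left; exact le_refl D]
      have hbE : a ∈ D → b ∈ E := by
        intro ha; rw [hEdef, if_pos ha]; exact Set.mem_union_right _ rfl
      have hEeq : a ∉ D → E = D := by intro ha; rw [hEdef, if_neg ha]
      have hEsub : E ⊆ D ∪ {b} := by
        rw [hEdef]; split <;> [exact le_refl _; exact Set.subset_union_left]
      have hEL : E ∈ L := by
        refine hmax E ?_ ?_ ?_ ?_
        · intro x hx
          rcases hEsub hx with h | h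
          · exact (hDS' h).1
          · rw [h]; exact hbS
        · exact le_trans hD2 (Set.ncard_le_ncard hDE E.toFinite)
        · intro heq
          have hss : D ⊂ S' := ssubset_of_subset_of_ne hDS' hDne
          obtain ⟨x, hxS', hxD⟩ := Set.exists_of_ssubset hss
          have hxE : x ∈ E := heq ▸ hxS'.1
          rcases hEsub hxE with h | h
          · exact hxD h
          · exact hxS'.2 h
        · intro B hBL
          rcases eq_or_ne B A with rfl | hBne
          · by_cases ha : a ∈ D
            · refine Or.inr (Or.inr ?_)
              rw [hAab]
              intro x hx
              rcases hx with rfl | hx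
              · exact hDE ha
              · rw [hx]; exact hbE ha
            · refine Or.inl ?_
              rw [hEeq ha, hAab]
              ext x
              simp only [Set.mem_inter_iff, Set.mem_insert_iff, Set.mem_singleton_iff,
                Set.mem_empty_iff_false, iff_false, not_and]
              rintro hxD (rfl | rfl)
              · exact ha hxD
              · exact hbD hxD
          · have hB'L' : B \ {b} ∈ L' := ⟨B, ⟨hBL, hBne⟩, rfl⟩
            have hlamD := hDlam _ hB'L'
            rcases hdich B hBL hBne with hABsub | hABdisj
            · -- A ⊆ B, so b ∈ B, a ∈ B \ {b}
              have hbB : b ∈ B := hABsub hbA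
              have haB' : a ∈ B \ {b} := ⟨hABsub haA, hab⟩
              have hBsplit : B = (B \ {b}) ∪ {b} := by
                ext x; simp only [Set.mem_union, Set.mem_diff, Set.mem_singleton_iff]
                constructor
                · intro hx; by_cases hxb : x = b
                  · exact Or.inr hxb
                  · exact Or.inl ⟨hx, hxb⟩
                · rintro (⟨hx, _⟩ | rfl) <;> [exact hx; exact hbB]
              rcases hlamD with h | h | h
              · -- D ∩ (B \ {b}) = ∅ ⇒ a ∉ D, E = D, E ∩ B = ∅
                have ha : a ∉ D := fun haD =>
                  absurd (show a ∈ D ∩ (B \ {b}) from ⟨haD, haB'⟩) (h ▸ fun h => h)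
                refine Or.inl ?_
                rw [hEeq ha]
                ext x
                simp only [Set.mem_inter_iff, Set.mem_empty_iff_false, iff_false, not_and]
                intro hxD hxB
                rcases eq_or_ne x b with rfl | hxb
                · exact hbD hxD
                · exact absurd (show x ∈ D ∩ (B \ {b}) from ⟨hxD, hxB, hxb⟩)
                    (h ▸ fun h => h)
              · -- D ⊆ B \ {b} ⇒ E ⊆ B
                refine Or.inr (Or.inl ?_)
                intro x hx
                rcases hEsub hx with hxD | hxb
                · exact (h hxD).1
                · rw [hxb]; exact hbB
              · -- B \ {b} ⊆ D ⇒ a ∈ D ⇒ B ⊆ E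
                have ha : a ∈ D := h haB'
                refine Or.inr (Or.inr ?_)
                intro x hxB
                rcases eq_or_ne x b with rfl | hxb
                · exact hbE ha
                · exact hDE (h ⟨hxB, hxb⟩)
            · -- A ∩ B = ∅: a,b ∉ B, B \ {b} = B
              have haB : a ∉ B := fun h =>
                absurd (show a ∈ A ∩ B from ⟨haA, h⟩) (hABdisj ▸ fun h => h)
              have hbB : b ∉ B := fun h =>
                absurd (show b ∈ A ∩ B from ⟨hbA, h⟩) (hABdisj ▸ fun h => h)
              rw [Set.diff_singleton_eq_self hbB] at hlamD
              rcases hlamD with h | h | h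
              · refine Or.inl ?_
                ext x
                simp only [Set.mem_inter_iff, Set.mem_empty_iff_false, iff_false, not_and]
                intro hxE hxB
                rcases hEsub hxE with hxD | hxb
                · exact absurd (show x ∈ D ∩ B from ⟨hxD, hxB⟩) (h ▸ fun h => h)
                · rw [hxb] at hxB; exact hbB hxB
              · have ha : a ∉ D := fun haD => haB (h haD)
                exact Or.inr (Or.inl (by rw [hEeq ha]; exact h))
              · exact Or.inr (Or.inr (h.trans hDE))
      have hEneA : E ≠ A := by
        intro heq
        by_cases ha : a ∈ D
        · have : D ∪ {b} = A := by rw [← heq, hEdef, if_pos ha]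
          have hDsub : D ⊆ {a} := by
            intro x hx
            have hxA : x ∈ A := this ▸ Set.mem_union_left _ hx
            rw [hAab] at hxA
            rcases hxA with rfl | hxb
            · exact rfl
            · exact absurd (hxb ▸ hx : b ∈ D) hbD
          have : D.ncard ≤ 1 := le_trans (Set.ncard_le_ncard hDsub (Set.toFinite _))
            (by simp)
          omega
        · rw [hEeq ha] at heq
          exact ha (heq ▸ haA)
      refine ⟨E, ⟨hEL, hEneA⟩, ?_⟩
      simp only
      by_cases ha : a ∈ D
      · rw [hEdef, if_pos ha]
        ext x
        simp only [Set.mem_diff, Set.mem_union, Set.mem_singleton_iff]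
        constructor
        · rintro ⟨h1 | h1, h2⟩
          · exact h1
          · exact absurd h1 h2
        · exact fun hx => ⟨Or.inl hx, fun hxb => hbD (by rwa [hxb] at hx)⟩
      · rw [hEdef, if_neg ha, Set.diff_singleton_eq_self hbD]
    -- apply IH
    have hmem' : ∀ A' ∈ L', A' ⊆ S' ∧ 2 ≤ A'.ncard ∧ A' ≠ S' := by
      rintro _ ⟨B, ⟨hBL, hBne⟩, rfl⟩
      exact hBfacts B hBL hBne
    have hIH := IH (m - 1) (by omega) S' hS' L' hmem' hlam' hmax'
    have hcard : L'.ncard = (L \ {A}).ncard := Set.ncard_image_of_injOn hinj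
    have hLA : (L \ {A}).ncard = L.ncard - 1 := Set.ncard_diff_singleton_of_mem hAL
    have hL1 : 1 ≤ L.ncard := (Set.ncard_pos (Set.toFinite L)).mpr hLne
    omega

lemma pair_eq_cases {γ : Type*} {X Y I J : Set γ} (hne : X ≠ Y)
    (h : ({X, Y} : Set (Set γ)) = {I, J}) : (I = X ∧ J = Y) ∨ (I = Y ∧ J = X) := by
  have hI : I = X ∨ I = Y := by
    have : I ∈ ({X, Y} : Set (Set γ)) := by rw [h]; exact Set.mem_insert _ _
    simpa using this
  have hJ : J = X ∨ J = Y := by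
    have : J ∈ ({X, Y} : Set (Set γ)) := by
      rw [h]; exact Set.mem_insert_iff.mpr (Or.inr rfl)
    simpa using this
  have hX : X = I ∨ X = J := by
    have : X ∈ ({I, J} : Set (Set γ)) := by rw [← h]; exact Set.mem_insert _ _
    simpa using this
  have hY : Y = I ∨ Y = J := by
    have : Y ∈ ({I, J} : Set (Set γ)) := by
      rw [← h]; exact Set.mem_insert_iff.mpr (Or.inr rfl)
    simpa using this
  rcases hI with rfl | rfl
  · rcases hJ with rfl | rfl
    · rcases hY with rfl | rfl <;> exact absurd rfl hne
    · exact Or.inl ⟨rfl, rfl⟩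
  · rcases hJ with rfl | rfl
    · exact Or.inr ⟨rfl, rfl⟩
    · rcases hX with rfl | rfl <;> exact absurd rfl hne

lemma compatQuad_swapL {α : Type*} {I J K L : Set α} (h : CompatQuad I J K L) :
    CompatQuad J I K L := by unfold CompatQuad at *; tauto

lemma compatQuad_swapR {α : Type*} {I J K L : Set α} (h : CompatQuad I J K L) :
    CompatQuad I J L K := by unfold CompatQuad at *; tauto

lemma ne_compl_self' {α : Type*} {z : α} {A : Set α} (hzA : z ∉ A) : A ≠ Aᶜ := by
  intro h
  have : z ∈ Aᶜ := hzA
  rw [← h] at this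
  exact hzA this

lemma pairCompat_to_lam {α : Type*} {z : α} {A B : Set α} (hzA : z ∉ A) (hzB : z ∉ B)
    (h : PairCompatible ({A, Aᶜ} : Set (Set α)) {B, Bᶜ}) : Lam A B := by
  obtain ⟨I, J, K, L, hP, hQ, hc⟩ := h
  have hc' : CompatQuad A Aᶜ B Bᶜ := by
    rcases pair_eq_cases (ne_compl_self' hzA) hP with ⟨rfl, rfl⟩ | ⟨rfl, rfl⟩ <;>
    rcases pair_eq_cases (ne_compl_self' hzB) hQ with ⟨rfl, rfl⟩ | ⟨rfl, rfl⟩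
    · exact hc
    · exact compatQuad_swapR hc
    · exact compatQuad_swapL hc
    · exact compatQuad_swapL (compatQuad_swapR hc)
  rcases hc' with h | h | h | h
  · exact Or.inl h
  · refine Or.inr (Or.inl fun x hx => ?_)
    by_contra hxB
    exact absurd (show x ∈ A ∩ Bᶜ from ⟨hx, hxB⟩) (h ▸ fun h => h)
  · refine Or.inr (Or.inr fun x hx => ?_)
    by_contra hxA
    exact absurd (show x ∈ Aᶜ ∩ B from ⟨hxA, hx⟩) (h ▸ fun h => h)
  · exact absurd (show z ∈ Aᶜ ∩ Bᶜ from ⟨hzA, hzB⟩) (h ▸ fun h => h)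

lemma lam_to_pairCompat {α : Type*} {A B : Set α} (h : Lam A B) :
    PairCompatible ({A, Aᶜ} : Set (Set α)) {B, Bᶜ} := by
  refine ⟨A, Aᶜ, B, Bᶜ, rfl, rfl, ?_⟩
  rcases h with h | h | h
  · exact Or.inl h
  · refine Or.inr (Or.inl ?_)
    ext x
    simp only [Set.mem_inter_iff, Set.mem_compl_iff, Set.mem_empty_iff_false, iff_false,
      not_and]
    exact fun hx hxB => hxB (h hx)
  · refine Or.inr (Or.inr (Or.inl ?_))
    ext x
    simp only [Set.mem_inter_iff, Set.mem_compl_iff, Set.mem_empty_iff_false, iff_false]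
    rintro ⟨hxA, hxB⟩
    exact hxA (h hxB)

lemma split_canonical {α : Type*} {P : Set (Set α)} (z : α) (h : IsSplit2 P) :
    ∃ A : Set α, z ∉ A ∧ P = {A, Aᶜ} ∧ 2 ≤ A.ncard ∧ 2 ≤ Aᶜ.ncard := by
  obtain ⟨I, J, hP, hI, hJ, hU, hD⟩ := h
  have hJc : J = Iᶜ := by
    ext x
    simp only [Set.mem_compl_iff]
    constructor
    · intro hxJ hxI
      exact absurd (show x ∈ I ∩ J from ⟨hxI, hxJ⟩) (hD ▸ fun h => h)
    · intro hxI
      have : x ∈ I ∪ J := hU ▸ Set.mem_univ x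
      rcases this with h | h
      · exact absurd h hxI
      · exact h
  subst hJc
  by_cases hz : z ∈ I
  · refine ⟨Iᶜ, fun h => h hz, ?_, hJ, by rwa [compl_compl]⟩
    rw [hP, compl_compl, Set.pair_comm]
  · exact ⟨I, hz, hP, hI, hJ⟩


/-- A maximal collection of pairwise compatible splits of `{1,…,n}` (with each part of
each split of size ≥ 2) has exactly `n - 3` elements, for `n ≥ 3`. -/
theorem maximal_compatible_card {n : ℕ} (hn : 3 ≤ n) (C : Set (Set (Set (Fin n))))
    (hsplit : ∀ P ∈ C, IsSplit2 P)
    (hcompat : ∀ P ∈ C, ∀ Q ∈ C, PairCompatible P Q)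
    (hmax : ∀ P, IsSplit2 P → (∀ Q ∈ C, PairCompatible P Q) → P ∈ C) :
    C.ncard = n - 3 := by
  classical
  set z : Fin n := ⟨0, by omega⟩ with hzdef
  set S : Set (Fin n) := {z}ᶜ with hSdef
  set L : Set (Set (Fin n)) := {A | z ∉ A ∧ ({A, Aᶜ} : Set (Set (Fin n))) ∈ C} with hLdef
  have hmemL_iff : ∀ A : Set (Fin n), A ∈ L ↔ z ∉ A ∧ ({A, Aᶜ} : Set (Set (Fin n))) ∈ C :=
    fun A => Iff.rfl
  have hScard : S.ncard = n - 1 := by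
    have h2 := Set.ncard_add_ncard_compl ({z} : Set (Fin n))
    rw [Set.ncard_singleton, Nat.card_eq_fintype_card, Fintype.card_fin] at h2
    rw [hSdef]
    omega
  have hkey : ∀ P ∈ C, ∃ A ∈ L, P = {A, Aᶜ} ∧ 2 ≤ A.ncard ∧ 2 ≤ Aᶜ.ncard := by
    intro P hP
    obtain ⟨A, hzA, hPA, h2, h2c⟩ := split_canonical z (hsplit P hP)
    exact ⟨A, ⟨hzA, hPA ▸ hP⟩, hPA, h2, h2c⟩
  have hmemL : ∀ A ∈ L, A ⊆ S ∧ 2 ≤ A.ncard ∧ A ≠ S := by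
    intro A hA
    obtain ⟨hzA, hAC⟩ := hA
    obtain ⟨B, hBL, hPB, hB2, hBc2⟩ := hkey _ hAC
    have hAB : B = A := by
      rcases pair_eq_cases (ne_compl_self' hzA) hPB with ⟨h1, _⟩ | ⟨h1, _⟩
      · exact h1
      · exfalso
        have : z ∈ Aᶜ := hzA
        rw [← h1] at this
        exact hBL.1 this
    subst hAB
    refine ⟨fun x hx hxz => hzA (by rwa [Set.mem_singleton_iff.mp hxz] at hx), ?_, ?_⟩
    · exact hB2
    · intro heq
      have : Bᶜ = {z} := by rw [heq, hSdef, compl_compl]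
      rw [this, Set.ncard_singleton] at hBc2
      omega
  have hlamL : ∀ A ∈ L, ∀ B ∈ L, Lam A B := by
    intro A hA B hB
    exact pairCompat_to_lam hA.1 hB.1 (hcompat _ hA.2 _ hB.2)
  have hmaxL : ∀ D : Set (Fin n), D ⊆ S → 2 ≤ D.ncard → D ≠ S →
      (∀ B ∈ L, Lam D B) → D ∈ L := by
    intro D hDS hD2 hDne hDlam
    have hzD : z ∉ D := fun h => (hDS h) rfl
    have hDc2 : 2 ≤ Dᶜ.ncard := by
      obtain ⟨x, hxS, hxD⟩ := Set.exists_of_ssubset (ssubset_of_subset_of_ne hDS hDne)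
      have hxz : x ≠ z := fun h => hxS (by rw [h]; rfl)
      have hsub : ({z, x} : Set (Fin n)) ⊆ Dᶜ := by
        rintro y (rfl | rfl)
        · exact hzD
        · exact hxD
      calc 2 = ({z, x} : Set (Fin n)).ncard := (Set.ncard_pair (Ne.symm hxz)).symm
        _ ≤ Dᶜ.ncard := Set.ncard_le_ncard hsub (Set.toFinite _)
    have hsplitD : IsSplit2 ({D, Dᶜ} : Set (Set (Fin n))) :=
      ⟨D, Dᶜ, rfl, hD2, hDc2, Set.union_compl_self D, Set.inter_compl_self D⟩
    have hDC : ({D, Dᶜ} : Set (Set (Fin n))) ∈ C := by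
      refine hmax _ hsplitD ?_
      intro Q hQ
      obtain ⟨B, hBL, hQB, _, _⟩ := hkey Q hQ
      rw [hQB]
      exact lam_to_pairCompat (hDlam B hBL)
    exact ⟨hzD, hDC⟩
  have himg : C = (fun A => ({A, Aᶜ} : Set (Set (Fin n)))) '' L := by
    ext P
    constructor
    · intro hP
      obtain ⟨A, hAL, hPA, _, _⟩ := hkey P hP
      exact ⟨A, hAL, hPA.symm⟩
    · rintro ⟨A, hAL, rfl⟩
      exact hAL.2
  have hinj : Set.InjOn (fun A => ({A, Aᶜ} : Set (Set (Fin n)))) L := by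
    intro A₁ h₁ A₂ h₂ heq
    simp only at heq
    rcases pair_eq_cases (ne_compl_self' h₁.1) heq with ⟨h, _⟩ | ⟨h, _⟩
    · exact h.symm
    · exfalso
      have : z ∈ A₁ᶜ := h₁.1
      rw [← h] at this
      exact h₂.1 this
  have hLcard := laminar_card (n - 1) S hScard L hmemL hlamL hmaxL
  rw [himg, Set.ncard_image_of_injOn hinj, hLcard]
  omega
end
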